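/- arXiv:math/0007055 — 3 statements merged into one kernel-verified Lean document; each statement's English description precedes it below -/
import Mathlib

section
/- Let (E,d) be a metric space and let S : [0,∞) × E → E be a Lipschitz semigroup with Lipschitz constant L. Then for every T > 0 and every Lipschitz continuous map w : [0,T] → E one has d(w(T), S_T w(0)) ≤ L · ∫₀^T liminf_{h→0⁺} d(w(t+h), S_h w(t))/h dt, where the integrand is bounded (by (Lip(w) + L)) and the integral may be taken as the (upper) Lebesgue integral. -/
open MeasureTheory Filter Set Topology
open scoped ENNReal NNReal

/-!
Put `f t = d(S_{T-t} w(t), S_T w(0))`. Writing `S_{T-t} w(t) = S_{T-t-h} S_h w(t)` and using the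
Lipschitz bound at the common time `T-t-h` gives
`f (t+h) - f t ≤ L d(w(t+h), S_h w(t))`, so the lower right Dini derivative of `f` is at most `L`
times the (bounded) integrand `g`. A continuous `f` with this property satisfies
`f T - f 0 ≤ ∫ g`: by Vitali–Carathéodory `g` lies strictly below a bounded lower semicontinuous
`G` of almost the same integral, and then `t ↦ ∫_0^t G - f t`, being continuous and just to the
right of every point frequently at least its value there, never drops below its value at `0`.
-/

theorem ContinuousOn.le_of_frequently_nhdsGT_le {α β : Type*}
    [ConditionallyCompleteLinearOrder α] [TopologicalSpace α] [OrderTopology α] [DenselyOrdered α]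
    [Preorder β] [TopologicalSpace β] [ClosedIciTopology β] {D : α → β} {a b : α}
    (hD : ContinuousOn D (Icc a b)) (hfreq : ∀ x ∈ Ico a b, ∃ᶠ z in 𝓝[>] x, D x ≤ D z) :
    ∀ x ∈ Icc a b, D a ≤ D x := by
  have hclosed : IsClosed ({x | D a ≤ D x} ∩ Icc a b) := by
    rw [inter_comm]
    exact hD.preimage_isClosed_of_isClosed isClosed_Icc isClosed_Ici
  refine fun x hx =>
    hclosed.Icc_subset_of_forall_exists_gt le_rfl (fun y ⟨hy, hyI⟩ z hz => ?_) hx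
  obtain ⟨u, hyu, hu⟩ := ((hfreq y hyI).and_eventually (Ioc_mem_nhdsGT hz)).exists
  exact ⟨u, le_trans hy hyu, hu⟩

section BoundedPrimitive

variable {G : ℝ → ℝ≥0∞} {K : ℝ≥0}

theorem setLIntegral_Ico_le_of_le (hGK : ∀ x, G x ≤ K) (x z : ℝ) :
    ∫⁻ y in Ico x z, G y ≤ K * ENNReal.ofReal (z - x) := by
  calc ∫⁻ y in Ico x z, G y ≤ ∫⁻ _ in Ico x z, (K : ℝ≥0∞) :=
        setLIntegral_mono' measurableSet_Ico fun y _ => hGK y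
    _ = K * ENNReal.ofReal (z - x) := by rw [setLIntegral_const, Real.volume_Ico]

theorem setLIntegral_Ico_ne_top_of_le (hGK : ∀ x, G x ≤ K) (x z : ℝ) :
    ∫⁻ y in Ico x z, G y ≠ ∞ :=
  ne_top_of_le_ne_top (by finiteness) (setLIntegral_Ico_le_of_le hGK x z)

theorem toReal_setLIntegral_Ico_sub (hGK : ∀ x, G x ≤ K) {a x z : ℝ} (hax : a ≤ x)
    (hxz : x ≤ z) :
    (∫⁻ y in Ico a z, G y).toReal - (∫⁻ y in Ico a x, G y).toReal =
      (∫⁻ y in Ico x z, G y).toReal := by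
  rw [← Ico_union_Ico_eq_Ico hax hxz, lintegral_union measurableSet_Ico Ico_disjoint_Ico_same,
    ENNReal.toReal_add (setLIntegral_Ico_ne_top_of_le hGK _ _)
      (setLIntegral_Ico_ne_top_of_le hGK _ _), add_sub_cancel_left]

theorem toReal_setLIntegral_Ico_le (hGK : ∀ x, G x ≤ K) {x z : ℝ} (hxz : x ≤ z) :
    (∫⁻ y in Ico x z, G y).toReal ≤ K * (z - x) := by
  refine ENNReal.toReal_le_of_le_ofReal (by positivity) ?_
  rw [ENNReal.ofReal_mul K.coe_nonneg, ENNReal.ofReal_coe_nnreal]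
  exact setLIntegral_Ico_le_of_le hGK x z

theorem continuousOn_toReal_setLIntegral_Ico (hGK : ∀ x, G x ≤ K) (a b : ℝ) :
    ContinuousOn (fun t => (∫⁻ y in Ico a t, G y).toReal) (Icc a b) := by
  refine (LipschitzOnWith.of_le_add_mul K fun x hx z hz => ?_).continuousOn
  rw [← sub_le_iff_le_add']
  rcases le_total x z with hxz | hzx
  · rw [← neg_sub, toReal_setLIntegral_Ico_sub hGK hx.1 hxz]
    exact (neg_nonpos.2 ENNReal.toReal_nonneg).trans (by positivity)
  · rw [toReal_setLIntegral_Ico_sub hGK hz.1 hzx, Real.dist_eq,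
      abs_of_nonneg (sub_nonneg.2 hzx)]
    exact toReal_setLIntegral_Ico_le hGK hzx

end BoundedPrimitive

theorem ofReal_sub_le_setLIntegral_of_lowerSemicontinuous {f : ℝ → ℝ} {g G : ℝ → ℝ≥0∞}
    {K : ℝ≥0} {a b : ℝ} (hab : a ≤ b) (hf : ContinuousOn f (Icc a b)) (hG : LowerSemicontinuous G)
    (hGK : ∀ x, G x ≤ K) (hgG : ∀ x ∈ Ico a b, g x < G x)
    (hslope : ∀ x ∈ Ico a b, ∀ r : ℝ≥0, g x < r → ∃ᶠ z in 𝓝[>] x, slope f x z < r) :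
    ENNReal.ofReal (f b - f a) ≤ ∫⁻ x in Ico a b, G x := by
  set B : ℝ → ℝ := fun t => (∫⁻ y in Ico a t, G y).toReal
  have hstep : ∀ x ∈ Ico a b, ∃ᶠ z in 𝓝[>] x, B x - f x ≤ B z - f z := by
    intro x hx
    obtain ⟨r, hgr, hrG⟩ := ENNReal.lt_iff_exists_nnreal_btwn.1 (hgG x hx)
    obtain ⟨δ, hδ, hball⟩ := Metric.eventually_nhds_iff.1 (hG x r hrG)
    refine ((hslope x hx r hgr).and_eventually
      (Ioo_mem_nhdsGT (lt_add_of_pos_right x hδ))).mono ?_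
    rintro z ⟨hslope_lt, hxz, hzδ⟩
    have hf_lt : f z - f x < r * (z - x) := by
      rwa [slope_def_field, div_lt_iff₀ (sub_pos.2 hxz)] at hslope_lt
    have hG_ge : r * (z - x) ≤ (∫⁻ y in Ico x z, G y).toReal := by
      rw [← ENNReal.ofReal_le_iff_le_toReal (setLIntegral_Ico_ne_top_of_le hGK x z),
        ENNReal.ofReal_mul r.coe_nonneg, ENNReal.ofReal_coe_nnreal, ← Real.volume_Ico,
        ← setLIntegral_const]
      refine setLIntegral_mono' measurableSet_Ico fun y hy => (hball ?_).le
      rw [Real.dist_eq, abs_of_nonneg (sub_nonneg.2 hy.1)]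
      linarith [hy.2]
    have := toReal_setLIntegral_Ico_sub hGK hx.1 hxz.le
    linarith
  have hBf := ((continuousOn_toReal_setLIntegral_Ico hGK a b).sub hf).le_of_frequently_nhdsGT_le
    hstep b ⟨hab, le_rfl⟩
  rw [ENNReal.ofReal_le_iff_le_toReal (setLIntegral_Ico_ne_top_of_le hGK a b)]
  simp only [Pi.sub_apply, Ico_self, Measure.restrict_empty, lintegral_zero_measure,
    ENNReal.toReal_zero] at hBf
  linarith

theorem ofReal_sub_le_setLIntegral_of_slope {f : ℝ → ℝ} {g : ℝ → ℝ≥0∞} {M : ℝ≥0} {a b : ℝ}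
    (hab : a ≤ b) (hf : ContinuousOn f (Icc a b))
    (hg : AEMeasurable g (volume.restrict (Ico a b))) (hgM : ∀ x ∈ Ico a b, g x ≤ M)
    (hslope : ∀ x ∈ Ico a b, ∀ r : ℝ≥0, g x < r → ∃ᶠ z in 𝓝[>] x, slope f x z < r) :
    ENNReal.ofReal (f b - f a) ≤ ∫⁻ x in Ico a b, g x := by
  refine ENNReal.le_of_forall_pos_le_add fun ε hε _ => ?_
  obtain ⟨G, hgG, hG, hGint⟩ := exists_lt_lowerSemicontinuous_lintegral_ge_of_aemeasurable
    (volume.restrict (Ico a b)) _ hg.ennreal_toNNReal (ENNReal.coe_ne_zero.2 hε.ne')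
  have hGM : LowerSemicontinuous fun x => min (G x) ((M + 1 : ℝ≥0) : ℝ≥0∞) :=
    hG.inf lowerSemicontinuous_const
  calc ENNReal.ofReal (f b - f a) ≤ ∫⁻ x in Ico a b, min (G x) ((M + 1 : ℝ≥0) : ℝ≥0∞) := by
        refine ofReal_sub_le_setLIntegral_of_lowerSemicontinuous hab hf hGM
          (fun x => min_le_right _ _) (fun x hx => lt_min ?_ ?_) hslope
        · simpa [ENNReal.coe_toNNReal (ne_top_of_le_ne_top ENNReal.coe_ne_top (hgM x hx))]
            using hgG x
        · exact (hgM x hx).trans_lt (by exact_mod_cast lt_add_one M)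
    _ ≤ ∫⁻ x in Ico a b, G x := lintegral_mono fun x => min_le_left _ _
    _ ≤ (∫⁻ x in Ico a b, ((g x).toNNReal : ℝ≥0∞)) + ε := hGint
    _ ≤ (∫⁻ x in Ico a b, g x) + ε := by
        gcongr with x
        exact ENNReal.coe_toNNReal_le_self

theorem measurable_liminf_nhdsGT {α β : Type*} [TopologicalSpace α] [MeasurableSpace α]
    [OpensMeasurableSpace α] [CompleteLinearOrder β] [TopologicalSpace β] [OrderTopology β]
    [SecondCountableTopology β] [MeasurableSpace β] [BorelSpace β] {Q : α → ℝ → β} {a : ℝ}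
    (hQ : ∀ h > a, Continuous (Q · h)) : Measurable fun t => liminf (Q t) (𝓝[>] a) := by
  simp_rw [(nhdsWithin_hasBasis Metric.nhds_basis_ball_inv_nat_succ _).liminf_eq_iSup_iInf]
  exact .iSup fun n => .iSup fun _ =>
    (upperSemicontinuous_biInf fun h hh => (hQ h hh.2).upperSemicontinuous).measurable

theorem eventually_add_mem_Icc {a b t : ℝ} (ht : t ∈ Ico a b) :
    ∀ᶠ h in 𝓝[>] 0, t + h ∈ Icc a b := by
  filter_upwards [Ioo_mem_nhdsGT (sub_pos.2 ht.2)] with h hh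
  exact ⟨by linarith [ht.1, hh.1], by linarith [hh.2]⟩

structure IsLipschitzSemigroup {E : Type*} [PseudoMetricSpace E] (S : ℝ → E → E) (L : ℝ) :
    Prop where
  map_zero : ∀ u, S 0 u = u
  map_add : ∀ s t : ℝ, 0 ≤ s → 0 ≤ t → ∀ u, S t (S s u) = S (t + s) u
  dist_le : ∀ s t : ℝ, 0 ≤ s → 0 ≤ t → ∀ u v, dist (S t u) (S s v) ≤ L * (|t - s| + dist u v)

noncomputable def errorQuotient {E : Type*} [PseudoMetricSpace E] (S : ℝ → E → E) (w : ℝ → E)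
    (t h : ℝ) : ℝ :=
  dist (w (t + h)) (S h (w t)) / h

namespace IsLipschitzSemigroup

variable {E : Type*} [PseudoMetricSpace E] {S : ℝ → E → E} {L : ℝ}

theorem dist_self_le (hS : IsLipschitzSemigroup S L) (u : E) {h : ℝ} (hh : 0 ≤ h) :
    dist u (S h u) ≤ L * h := by
  simpa [hS.map_zero, dist_comm, abs_of_nonneg hh] using hS.dist_le 0 h le_rfl hh u u

theorem dist_le_of_add (hS : IsLipschitzSemigroup S L) {τ s : ℝ} (hτ : 0 ≤ τ) (hs : 0 ≤ s)
    (u v : E) : dist (S τ v) (S (τ + s) u) ≤ L * dist v (S s u) := by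
  simpa [← hS.map_add s τ hs hτ] using hS.dist_le τ τ hτ hτ v (S s u)

theorem continuousOn_uncurry (hS : IsLipschitzSemigroup S L) :
    ContinuousOn (fun p : ℝ × E => S p.1 p.2) (Ici 0 ×ˢ univ) := by
  refine (LipschitzOnWith.of_dist_le' (K := 2 * L) fun p hp q hq => ?_).continuousOn
  have hL : 0 ≤ L := by simpa using dist_nonneg.trans (hS.dist_self_le p.2 zero_le_one)
  calc dist (S p.1 p.2) (S q.1 q.2) ≤ L * (|p.1 - q.1| + dist p.2 q.2) :=
        hS.dist_le q.1 p.1 hq.1 hp.1 p.2 q.2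
    _ ≤ L * (dist p q + dist p q) := by
        rw [← Real.dist_eq, Prod.dist_eq]
        gcongr
        exacts [le_max_left _ _, le_max_right _ _]
    _ = 2 * L * dist p q := by ring

theorem errorQuotient_le (hS : IsLipschitzSemigroup S L) {w : ℝ → E} {C : ℝ≥0} {s : Set ℝ}
    (hw : LipschitzOnWith C w s) {t h : ℝ} (ht : t ∈ s) (hth : t + h ∈ s) (hh : 0 < h) :
    errorQuotient S w t h ≤ C + L := by
  rw [errorQuotient, div_le_iff₀ hh]
  calc dist (w (t + h)) (S h (w t)) ≤ dist (w (t + h)) (w t) + dist (w t) (S h (w t)) :=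
        dist_triangle _ _ _
    _ ≤ C * dist (t + h) t + L * h :=
        add_le_add (hw.dist_le_mul _ hth _ ht) (hS.dist_self_le _ hh.le)
    _ = (C + L) * h := by rw [Real.dist_eq, add_sub_cancel_left, abs_of_pos hh]; ring

theorem continuousOn_apply_sub (hS : IsLipschitzSemigroup S L) {w : ℝ → E} {a T : ℝ}
    (hw : ContinuousOn w (Icc a T)) : ContinuousOn (fun t => S (T - t) (w t)) (Icc a T) :=
  hS.continuousOn_uncurry.comp ((continuousOn_const.sub continuousOn_id).prodMk hw)
    fun _ ht => ⟨sub_nonneg.2 ht.2, trivial⟩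

theorem slope_dist_le (hS : IsLipschitzSemigroup S L) (w : ℝ → E) (v : E) {T x h : ℝ}
    (hh : 0 < h) (hxT : x + h ≤ T) :
    slope (fun t => dist (S (T - t) (w t)) v) x (x + h) ≤ L * errorQuotient S w x h := by
  rw [slope_def_field, add_sub_cancel_left, errorQuotient, mul_div_assoc',
    div_le_div_iff_of_pos_right hh]
  calc dist (S (T - (x + h)) (w (x + h))) v - dist (S (T - x) (w x)) v
      ≤ dist (S (T - (x + h)) (w (x + h))) (S (T - (x + h) + h) (w x)) := by
        rw [show T - (x + h) + h = T - x by ring, sub_le_iff_le_add]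
        exact dist_triangle _ _ _
    _ ≤ L * dist (w (x + h)) (S h (w x)) := hS.dist_le_of_add (by linarith) hh.le _ _

theorem eventually_errorQuotient_mem_Icc (hS : IsLipschitzSemigroup S L) {w : ℝ → E} {C : ℝ≥0}
    {a b t : ℝ} (hw : LipschitzOnWith C w (Icc a b)) (ht : t ∈ Ico a b) :
    ∀ᶠ h in 𝓝[>] 0, errorQuotient S w t h ∈ Icc 0 (C + L) := by
  filter_upwards [eventually_add_mem_Icc ht, self_mem_nhdsWithin] with h hth hh
  exact ⟨div_nonneg dist_nonneg (le_of_lt hh), hS.errorQuotient_le hw ⟨ht.1, ht.2.le⟩ hth hh⟩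

theorem liminf_errorQuotient_le (hS : IsLipschitzSemigroup S L) {w : ℝ → E} {C : ℝ≥0}
    {a b t : ℝ} (hw : LipschitzOnWith C w (Icc a b)) (ht : t ∈ Ico a b) :
    liminf (errorQuotient S w t) (𝓝[>] 0) ≤ C + L :=
  have hq := hS.eventually_errorQuotient_mem_Icc hw ht
  liminf_le_of_frequently_le (hq.mono fun _ h => h.2).frequently ⟨0, hq.mono fun _ h => h.1⟩

theorem ofReal_liminf_errorQuotient (hS : IsLipschitzSemigroup S L) {w : ℝ → E} {C : ℝ≥0}
    {a b t : ℝ} (hw : LipschitzOnWith C w (Icc a b)) (ht : t ∈ Ico a b) :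
    ENNReal.ofReal (liminf (errorQuotient S w t) (𝓝[>] 0)) =
      liminf (fun h => ENNReal.ofReal (errorQuotient S w t h)) (𝓝[>] 0) :=
  have hq := hS.eventually_errorQuotient_mem_Icc hw ht
  ENNReal.ofReal_mono.map_liminf_of_continuousAt _ ENNReal.continuous_ofReal.continuousAt
    (IsBoundedUnder.isCoboundedUnder_ge ⟨C + L, hq.mono fun _ h => h.2⟩)
    ⟨0, hq.mono fun _ h => h.1⟩

theorem aemeasurable_ofReal_liminf_errorQuotient (hS : IsLipschitzSemigroup S L) {w : ℝ → E}
    {C : ℝ≥0} {T : ℝ} (hT : 0 ≤ T) (hw : LipschitzOnWith C w (Icc 0 T)) :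
    AEMeasurable (fun t => ENNReal.ofReal (liminf (errorQuotient S w t) (𝓝[>] 0)))
      (volume.restrict (Ico 0 T)) := by
  -- On `[0,T)` the liminf only sees values of `w` on `[0,T]`, so `w` may be replaced by its
  -- continuous extension, for which each quotient is continuous in `t`.
  set w' := IccExtend hT ((Icc 0 T).domRestrict w)
  have hw' : Continuous w' := continuous_IccExtend_iff.2 hw.continuousOn.domRestrict
  have hmeas :
      Measurable fun t => liminf (fun h => ENNReal.ofReal (errorQuotient S w' t h)) (𝓝[>] 0) :=
    measurable_liminf_nhdsGT fun h hh => ENNReal.continuous_ofReal.comp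
      (((hw'.comp (continuous_add_const h)).dist (hS.continuousOn_uncurry.comp_continuous
        (continuous_const.prodMk hw') fun _ => ⟨le_of_lt hh, trivial⟩)).div_const h)
  refine hmeas.aemeasurable.congr
    ((ae_restrict_iff' measurableSet_Ico).2 (.of_forall fun t ht => ?_))
  dsimp only
  rw [hS.ofReal_liminf_errorQuotient hw ht]
  refine liminf_congr ((eventually_add_mem_Icc ht).mono fun h hh => ?_)
  simp [errorQuotient, w', IccExtend_of_mem hT _ hh,
    IccExtend_of_mem hT _ (Ico_subset_Icc_self ht)]

theorem frequently_slope_lt (hS : IsLipschitzSemigroup S L) (hL : 0 < L) {w : ℝ → E} {C : ℝ≥0}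
    {T x : ℝ} (hw : LipschitzOnWith C w (Icc 0 T)) (v : E) (hx : x ∈ Ico 0 T) {r : ℝ≥0}
    (hr : ENNReal.ofReal L * ENNReal.ofReal (liminf (errorQuotient S w x) (𝓝[>] 0)) < r) :
    ∃ᶠ z in 𝓝[>] x, slope (fun t => dist (S (T - t) (w t)) v) x z < r := by
  rw [← ENNReal.ofReal_mul hL.le, ← ENNReal.ofReal_coe_nnreal,
    ENNReal.ofReal_lt_ofReal_iff'] at hr
  have hq := hS.eventually_errorQuotient_mem_Icc hw hx
  have hfreq : ∃ᶠ h in 𝓝[>] 0, errorQuotient S w x h < r / L :=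
    frequently_lt_of_liminf_lt
      (IsBoundedUnder.isCoboundedUnder_ge ⟨C + L, hq.mono fun _ h => h.2⟩)
      (by rw [lt_div_iff₀ hL]; linarith [hr.1])
  have hslope : ∃ᶠ h in 𝓝[>] 0, slope (fun t => dist (S (T - t) (w t)) v) x (x + h) < r :=
    (hfreq.and_eventually ((eventually_add_mem_Icc hx).and self_mem_nhdsWithin)).mono
      fun h ⟨hqr, hxh, hh⟩ =>
        (hS.slope_dist_le w v hh hxh.2).trans_lt (by rwa [lt_div_iff₀' hL] at hqr)
  have := (frequently_map (m := (x + ·))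
    (P := fun z => slope (fun t => dist (S (T - t) (w t)) v) x z < r)).2 hslope
  rwa [map_add_left_nhdsGT, add_zero] at this

end IsLipschitzSemigroup

/-- Error estimate for Lipschitz semigroups: for any Lipschitz curve `w` on `[0,T]`,
the distance between `w T` and `S T (w 0)` is bounded by `L` times the (upper Lebesgue)
integral of the lower right Dini quotient `d(w(t+h), S_h w(t))/h`. -/
theorem semigroup_error_estimate {E : Type*} [MetricSpace E]
    (S : ℝ → E → E) (L : ℝ) (hL : 0 < L)
    (hS0 : ∀ u : E, S 0 u = u)
    (hSsemi : ∀ s t : ℝ, 0 ≤ s → 0 ≤ t → ∀ u : E, S t (S s u) = S (t + s) u)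
    (hSlip : ∀ s t : ℝ, 0 ≤ s → 0 ≤ t → ∀ u w : E,
      dist (S t u) (S s w) ≤ L * (|t - s| + dist u w))
    (T : ℝ) (hT : 0 < T)
    (w : ℝ → E) (C : NNReal) (hw : LipschitzOnWith C w (Set.Icc 0 T)) :
    ENNReal.ofReal (dist (w T) (S T (w 0))) ≤
      ENNReal.ofReal L *
        ∫⁻ t in Set.Ioc (0 : ℝ) T,
          ENNReal.ofReal
            (liminf (fun h : ℝ => dist (w (t + h)) (S h (w t)) / h)
              (nhdsWithin 0 (Set.Ioi 0))) := by
  have hS : IsLipschitzSemigroup S L := ⟨hS0, hSsemi, hSlip⟩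
  have key := ofReal_sub_le_setLIntegral_of_slope
    (f := fun t => dist (S (T - t) (w t)) (S T (w 0))) (M := (L * (C + L)).toNNReal) hT.le
    ((continuous_id.dist continuous_const).comp_continuousOn
      (hS.continuousOn_apply_sub hw.continuousOn))
    ((hS.aemeasurable_ofReal_liminf_errorQuotient hT.le hw).const_mul (ENNReal.ofReal L))
    (fun x hx => by
      rw [← ENNReal.ofReal_mul hL.le]
      exact ENNReal.ofReal_le_ofReal
        (mul_le_mul_of_nonneg_left (hS.liminf_errorQuotient_le hw hx) hL.le))
    (fun x hx r hr => hS.frequently_slope_lt hL hw (S T (w 0)) hx hr)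
  rw [lintegral_const_mul' _ _ ENNReal.ofReal_ne_top, setLIntegral_congr Ico_ae_eq_Ioc] at key
  simp only [hS.map_zero, sub_self, sub_zero, dist_self] at key
  exact key
end

section
/- Let (E,d) be a metric space and let S, S' : [0,∞) × E → E be two Lipschitz semigroups, and let L denote the Lipschitz constant of S. Then for every u ∈ E and every t ≥ 0, d(S_t u, S'_t u) ≤ L · ∫₀^t limsup_{h→0⁺} d(S_h (S'_s u), S'_h (S'_s u))/h ds, where the integrand is bounded and the integral may be taken as the (upper) Lebesgue integral. -/
/-!
Fix `t` and `u`, write `w x = S' x u` and `g x = d(S_{t-x} (w x), w t)`, so that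
`g 0 = d(S_t u, S'_t u)` and `g t = 0`. Since `S_{t-x} = S_{t-x-h} ∘ S_h` and
`w (x + h) = S'_h (w x)`, the Lipschitz bound gives `g x - g (x + h) ≤ L d(S_h (w x), S'_h (w x))`.
The tangent distance `limsup_{h→0⁺}` need not be semicontinuous in `x`, so it is approximated from
above by `supDiffQuot S S' δ`, the supremum of the difference quotients over `0 < h < δ`, which is
lower semicontinuous along the orbit. For a right slope bound by a lower semicontinuous function, a
fencing argument gives `g 0 - g t ≤ L ∫₀ᵗ supDiffQuot S S' δ (w x) dx`, and monotone convergence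
lets `δ → 0`.
-/

open MeasureTheory Filter Set Topology

theorem LowerSemicontinuousWithinAt.eventually_mul_le_integral {φ : ℝ → ℝ} {x c : ℝ}
    (hφ : LowerSemicontinuousWithinAt φ (Ici x) x) (hc : c < φ x)
    (hint : ∀ᶠ z in 𝓝[>] x, IntervalIntegrable φ volume x z) :
    ∀ᶠ z in 𝓝[>] x, (z - x) * c ≤ ∫ y in x..z, φ y := by
  obtain ⟨u, hxu, hu⟩ := mem_nhdsGE_iff_exists_Ico_subset.1 (hφ c hc)
  filter_upwards [hint, Ioo_mem_nhdsGT hxu] with z hz ⟨hxz, hzu⟩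
  calc (z - x) * c = ∫ _ in x..z, c := by simp [mul_comm]
    _ ≤ ∫ y in x..z, φ y := intervalIntegral.integral_mono_on hxz.le intervalIntegrable_const hz
        fun y hy => (hu ⟨hy.1, hy.2.trans_lt hzu⟩).le

theorem sub_le_integral_of_eventually_sub_le {g φ : ℝ → ℝ} {a b : ℝ} (hab : a ≤ b)
    (hg : ContinuousOn g (Icc a b)) (hφi : IntervalIntegrable φ volume a b)
    (hφ : ∀ x ∈ Ico a b, LowerSemicontinuousWithinAt φ (Ici x) x)
    (hstep : ∀ x ∈ Ico a b, ∀ᶠ z in 𝓝[>] x, g x - g z ≤ (z - x) * φ x) :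
    g a - g b ≤ ∫ x in a..b, φ x := by
  have hint : ∀ c ∈ Icc a b, ∀ d ∈ Icc a b, IntervalIntegrable φ volume c d := fun c hc d hd =>
    hφi.mono_set (uIcc_subset_uIcc (by rwa [uIcc_of_le hab]) (by rwa [uIcc_of_le hab]))
  set f : ℝ → ℝ := fun x => g a - g x - ∫ y in a..x, φ y
  have hf : ContinuousOn f (Icc a b) := by
    refine (continuousOn_const.sub hg).sub ?_
    have := intervalIntegral.continuousOn_primitive_interval (a := a) (b := b)
      (by rw [uIcc_of_le hab]; exact (intervalIntegrable_iff_integrableOn_Icc_of_le hab).1 hφi)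
    rwa [uIcc_of_le hab] at this
  suffices f b ≤ 0 by simp only [f] at this; linarith
  refine image_le_of_liminf_slope_right_le_deriv_boundary hf (B := 0) (B' := 0) (by simp [f])
    continuousOn_const (fun x _ => hasDerivWithinAt_const _ _ _) (fun x hx r hr => ?_)
    ⟨hab, le_rfl⟩
  have hxb : Ioo x b ∈ 𝓝[>] x := Ioo_mem_nhdsGT hx.2
  have hr : 0 < r := hr
  have hlow := (hφ x hx).eventually_mul_le_integral (sub_lt_self (φ x) (half_pos hr)) <| by
    filter_upwards [hxb] with z hz
    exact hint x (Ico_subset_Icc_self hx) z ⟨hx.1.trans hz.1.le, hz.2.le⟩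
  refine Eventually.frequently ?_
  filter_upwards [hstep x hx, hlow, hxb] with z hgz hφz hz
  have hfz : f z - f x = g x - g z - ∫ y in x..z, φ y := by
    simp only [f]
    rw [← intervalIntegral.integral_interval_sub_left (hint a ⟨le_rfl, hab⟩ z
      ⟨hx.1.trans hz.1.le, hz.2.le⟩) (hint a ⟨le_rfl, hab⟩ x (Ico_subset_Icc_self hx))]
    ring
  rw [slope_def_field, hfz, div_lt_iff₀ (sub_pos.2 hz.1)]
  nlinarith [sub_pos.2 hz.1]

structure IsLipschitzSemigroup_s1 {E : Type*} [MetricSpace E] (S : ℝ → E → E) (L : ℝ) : Prop where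
  zero : ∀ u : E, S 0 u = u
  add : ∀ s t : ℝ, 0 ≤ s → 0 ≤ t → ∀ u : E, S t (S s u) = S (t + s) u
  dist_le : ∀ s t : ℝ, 0 ≤ s → 0 ≤ t → ∀ u w : E,
    dist (S t u) (S s w) ≤ L * (|t - s| + dist u w)

namespace IsLipschitzSemigroup_s1

variable {E : Type*} [MetricSpace E] {S S' : ℝ → E → E} {L L' : ℝ}

theorem nonneg (hS : IsLipschitzSemigroup_s1 S L) (u : E) : 0 ≤ L := by
  simpa using dist_nonneg.trans (hS.dist_le 0 1 le_rfl zero_le_one u u)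

theorem dist_apply_self_le (hS : IsLipschitzSemigroup_s1 S L) {h : ℝ} (hh : 0 ≤ h) (u : E) :
    dist (S h u) u ≤ L * h := by
  simpa [hS.zero, abs_of_nonneg hh] using hS.dist_le 0 h le_rfl hh u u

theorem dist_apply_apply_le (hS : IsLipschitzSemigroup_s1 S L) {t : ℝ} (ht : 0 ≤ t) (u w : E) :
    dist (S t u) (S t w) ≤ L * dist u w := by
  simpa using hS.dist_le t t ht ht u w

theorem continuousOn_uncurry_s1 (hS : IsLipschitzSemigroup_s1 S L) :
    ContinuousOn (Function.uncurry S) (Ici 0 ×ˢ univ) := by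
  refine LipschitzOnWith.continuousOn (K := (2 * L).toNNReal) <|
    LipschitzOnWith.of_dist_le' fun p hp q hq => ?_
  have hL := hS.nonneg p.2
  calc dist (S p.1 p.2) (S q.1 q.2) ≤ L * (|p.1 - q.1| + dist p.2 q.2) :=
        hS.dist_le _ _ hq.1 hp.1 _ _
    _ ≤ L * (dist p q + dist p q) := by
        rw [← Real.dist_eq, Prod.dist_eq]
        gcongr
        exacts [le_max_left _ _, le_max_right _ _]
    _ = 2 * L * dist p q := by ring

theorem continuousOn_apply {X : Type*} [TopologicalSpace X] {τ : X → ℝ} {γ : X → E} {s : Set X}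
    (hS : IsLipschitzSemigroup_s1 S L) (hτ : ContinuousOn τ s) (hτ0 : ∀ x ∈ s, 0 ≤ τ x)
    (hγ : ContinuousOn γ s) : ContinuousOn (fun x => S (τ x) (γ x)) s :=
  hS.continuousOn_uncurry_s1.comp (hτ.prodMk hγ) fun x hx => ⟨hτ0 x hx, trivial⟩

-- Clamping time at `0` extends the orbit continuously to all of `ℝ`, so that functions along it
-- are globally lower semicontinuous, hence measurable.
theorem continuous_apply_max (hS : IsLipschitzSemigroup_s1 S L) (u : E) :
    Continuous fun s => S (max s 0) u :=
  continuousOn_univ.1 <|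
    hS.continuousOn_apply (by fun_prop) (fun _ _ => le_max_right _ _) continuousOn_const

theorem continuous_apply (hS : IsLipschitzSemigroup_s1 S L) {h : ℝ} (hh : 0 ≤ h) :
    Continuous (S h) :=
  continuousOn_univ.1 <| hS.continuousOn_apply continuousOn_const (fun _ _ => hh) continuousOn_id

theorem dist_div_le_add (hS : IsLipschitzSemigroup_s1 S L) (hS' : IsLipschitzSemigroup_s1 S' L') {h : ℝ}
    (hh : 0 < h) (u : E) : dist (S h u) (S' h u) / h ≤ L + L' := by
  rw [div_le_iff₀ hh]
  calc dist (S h u) (S' h u) ≤ dist (S h u) u + dist (S' h u) u := dist_triangle_right _ _ _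
    _ ≤ L * h + L' * h :=
        add_le_add (hS.dist_apply_self_le hh.le u) (hS'.dist_apply_self_le hh.le u)
    _ = (L + L') * h := by ring

theorem dist_orbit_le (hS : IsLipschitzSemigroup_s1 S L) (hS' : IsLipschitzSemigroup_s1 S' L')
    {x h t : ℝ} (hx : 0 ≤ x) (hh : 0 ≤ h) (ht : x + h ≤ t) (u : E) :
    dist (S (t - x) (S' x u)) (S' t u) ≤
      dist (S (t - (x + h)) (S' (x + h) u)) (S' t u) +
        L * dist (S h (S' x u)) (S' h (S' x u)) := by
  have hth : 0 ≤ t - (x + h) := sub_nonneg.2 ht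
  have hS_split : S (t - x) (S' x u) = S (t - (x + h)) (S h (S' x u)) := by
    rw [hS.add h _ hh hth]; ring_nf
  have hS'_split : S' (x + h) u = S' h (S' x u) := by
    rw [hS'.add x h hx hh]; ring_nf
  rw [hS_split, hS'_split]
  calc _ ≤ dist (S (t - (x + h)) (S h (S' x u))) (S (t - (x + h)) (S' h (S' x u))) +
        dist (S (t - (x + h)) (S' h (S' x u))) (S' t u) := dist_triangle _ _ _
    _ ≤ _ := by linarith [hS.dist_apply_apply_le hth (S h (S' x u)) (S' h (S' x u))]

end IsLipschitzSemigroup_s1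

noncomputable def supDiffQuot {E : Type*} [MetricSpace E] (S S' : ℝ → E → E) (δ : ℝ) (v : E) :
    ℝ :=
  ⨆ h : Ioo (0 : ℝ) δ, dist (S h v) (S' h v) / h

section supDiffQuot

variable {E : Type*} [MetricSpace E] {S S' : ℝ → E → E} {L L' δ : ℝ}

theorem supDiffQuot_le {c : ℝ} (hδ : 0 < δ) {v : E}
    (hc : ∀ h ∈ Ioo 0 δ, dist (S h v) (S' h v) / h ≤ c) : supDiffQuot S S' δ v ≤ c :=
  have : Nonempty (Ioo 0 δ) := (nonempty_Ioo.2 hδ).to_subtype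
  ciSup_le fun h => hc h h.2

theorem bddAbove_range_dist_div (hS : IsLipschitzSemigroup_s1 S L)
    (hS' : IsLipschitzSemigroup_s1 S' L') (v : E) :
    BddAbove (range fun h : Ioo (0 : ℝ) δ => dist (S h v) (S' h v) / h) :=
  ⟨L + L', by rintro _ ⟨h, rfl⟩; exact hS.dist_div_le_add hS' h.2.1 v⟩

theorem le_supDiffQuot (hS : IsLipschitzSemigroup_s1 S L)
    (hS' : IsLipschitzSemigroup_s1 S' L') {h : ℝ} (hh : h ∈ Ioo 0 δ) (v : E) :
    dist (S h v) (S' h v) / h ≤ supDiffQuot S S' δ v :=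
  le_ciSup (bddAbove_range_dist_div hS hS' v) ⟨h, hh⟩

theorem supDiffQuot_nonneg (hS : IsLipschitzSemigroup_s1 S L)
    (hS' : IsLipschitzSemigroup_s1 S' L') (hδ : 0 < δ) (v : E) : 0 ≤ supDiffQuot S S' δ v :=
  (div_nonneg dist_nonneg (half_pos hδ).le).trans
    (le_supDiffQuot hS hS' ⟨half_pos hδ, half_lt_self hδ⟩ v)

theorem supDiffQuot_le_add (hS : IsLipschitzSemigroup_s1 S L)
    (hS' : IsLipschitzSemigroup_s1 S' L') (hδ : 0 < δ) (v : E) : supDiffQuot S S' δ v ≤ L + L' :=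
  supDiffQuot_le hδ fun _ hh => hS.dist_div_le_add hS' hh.1 v

theorem supDiffQuot_mono (hS : IsLipschitzSemigroup_s1 S L)
    (hS' : IsLipschitzSemigroup_s1 S' L') {δ' : ℝ} (hδ : 0 < δ) (hδδ' : δ ≤ δ') (v : E) :
    supDiffQuot S S' δ v ≤ supDiffQuot S S' δ' v :=
  supDiffQuot_le hδ fun _ hh => le_supDiffQuot hS hS' ⟨hh.1, hh.2.trans_le hδδ'⟩ v

theorem lowerSemicontinuous_supDiffQuot_comp {X : Type*} [TopologicalSpace X] {γ : X → E}
    (hS : IsLipschitzSemigroup_s1 S L) (hS' : IsLipschitzSemigroup_s1 S' L') (hγ : Continuous γ) :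
    LowerSemicontinuous fun x => supDiffQuot S S' δ (γ x) :=
  lowerSemicontinuous_ciSup (fun x => bddAbove_range_dist_div hS hS' (γ x)) fun h =>
    ((((hS.continuous_apply h.2.1.le).comp hγ).dist
      ((hS'.continuous_apply h.2.1.le).comp hγ)).div_const _).lowerSemicontinuous

theorem iInf_ofReal_supDiffQuot_le_limsup (hS : IsLipschitzSemigroup_s1 S L)
    (hS' : IsLipschitzSemigroup_s1 S' L') (v : E) :
    ⨅ n : ℕ, ENNReal.ofReal (supDiffQuot S S' (1 / (n + 1)) v) ≤
      ENNReal.ofReal (limsup (fun h => dist (S h v) (S' h v) / h) (𝓝[>] 0)) := by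
  set Φ := limsup (fun h => dist (S h v) (S' h v) / h) (𝓝[>] 0)
  have hbdd : IsBoundedUnder (· ≤ ·) (𝓝[>] 0) fun h => dist (S h v) (S' h v) / h :=
    isBoundedUnder_of_eventually_le (a := L + L') <| by
      filter_upwards [self_mem_nhdsWithin] with h hh using hS.dist_div_le_add hS' hh v
  refine ENNReal.le_of_forall_pos_le_add fun ε hε _ => ?_
  obtain ⟨δ, hδ, hlt⟩ := (nhdsGT_basis 0).eventually_iff.1 <|
    eventually_lt_of_limsup_lt (lt_add_of_pos_right Φ (NNReal.coe_pos.2 hε)) hbdd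
  obtain ⟨n, hn⟩ := exists_nat_one_div_lt hδ
  calc ⨅ n : ℕ, ENNReal.ofReal (supDiffQuot S S' (1 / (n + 1)) v)
      ≤ ENNReal.ofReal (supDiffQuot S S' (1 / (n + 1)) v) := iInf_le _ n
    _ ≤ ENNReal.ofReal (Φ + ε) := ENNReal.ofReal_le_ofReal <|
        supDiffQuot_le (by positivity) fun h hh => (hlt ⟨hh.1, hh.2.trans hn⟩).le
    _ ≤ ENNReal.ofReal Φ + ε := by
        simpa using ENNReal.ofReal_add_le (p := Φ) (q := ε)

end supDiffQuot

namespace IsLipschitzSemigroup_s1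

variable {E : Type*} [MetricSpace E] {S S' : ℝ → E → E} {L L' δ : ℝ}

theorem intervalIntegrable_supDiffQuot_orbit (hS : IsLipschitzSemigroup_s1 S L)
    (hS' : IsLipschitzSemigroup_s1 S' L') (hδ : 0 < δ) (u : E) (a b : ℝ) :
    IntervalIntegrable (fun s => supDiffQuot S S' δ (S' (max s 0) u)) volume a b :=
  (intervalIntegrable_const (c := L + L')).mono_fun'
    (lowerSemicontinuous_supDiffQuot_comp hS hS'
      (hS'.continuous_apply_max u)).measurable.aestronglyMeasurable
    (ae_of_all _ fun s => by
      simpa only [Real.norm_of_nonneg (supDiffQuot_nonneg hS hS' hδ _)] using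
        supDiffQuot_le_add hS hS' hδ _)

theorem dist_le_mul_integral_supDiffQuot (hS : IsLipschitzSemigroup_s1 S L)
    (hS' : IsLipschitzSemigroup_s1 S' L') {t : ℝ} (hδ : 0 < δ) (ht : 0 ≤ t) (u : E) :
    dist (S t u) (S' t u) ≤ L * ∫ s in 0..t, supDiffQuot S S' δ (S' (max s 0) u) := by
  have hL := hS.nonneg u
  have hlsc : LowerSemicontinuous fun s => L * supDiffQuot S S' δ (S' (max s 0) u) :=
    (continuous_const_mul L).comp_lowerSemicontinuous
      (lowerSemicontinuous_supDiffQuot_comp hS hS' (hS'.continuous_apply_max u))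
      (monotone_mul_left_of_nonneg hL)
  have horbit : ContinuousOn (fun x => S' x u) (Icc 0 t) :=
    hS'.continuousOn_apply continuousOn_id (fun x hx => hx.1) continuousOn_const
  have hg : ContinuousOn (fun x => dist (S (t - x) (S' x u)) (S' t u)) (Icc 0 t) :=
    continuous_dist.comp_continuousOn <| (hS.continuousOn_apply
      (continuousOn_const.sub continuousOn_id) (fun x hx => sub_nonneg.2 hx.2) horbit).prodMk
      continuousOn_const
  rw [← intervalIntegral.integral_const_mul]
  have key := sub_le_integral_of_eventually_sub_le ht hg
    ((intervalIntegrable_supDiffQuot_orbit hS hS' hδ u 0 t).const_mul L)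
    (fun x _ => hlsc.lowerSemicontinuousWithinAt _ x) fun x hx => ?_
  · simpa [hS.zero, hS'.zero] using key
  filter_upwards [Ioo_mem_nhdsGT hx.2, Ioo_mem_nhdsGT (lt_add_of_pos_right x hδ)] with z hzt hzδ
  have hzx : 0 < z - x := sub_pos.2 hzt.1
  have hquot := le_supDiffQuot hS hS' (δ := δ) ⟨hzx, by linarith [hzδ.2]⟩ (S' x u)
  rw [div_le_iff₀ hzx] at hquot
  have hstep := hS.dist_orbit_le hS' (t := t) hx.1 hzx.le (by linarith [hzt.2]) u
  rw [add_sub_cancel] at hstep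
  rw [max_eq_left hx.1]
  nlinarith [mul_le_mul_of_nonneg_left hquot hL]

end IsLipschitzSemigroup_s1

theorem semigroup_comparison_general {E : Type*} [MetricSpace E]
    (S S' : ℝ → E → E) (L L' : ℝ)
    (hS0 : ∀ u : E, S 0 u = u)
    (hSsemi : ∀ s t : ℝ, 0 ≤ s → 0 ≤ t → ∀ u : E, S t (S s u) = S (t + s) u)
    (hSlip : ∀ s t : ℝ, 0 ≤ s → 0 ≤ t → ∀ u w : E,
      dist (S t u) (S s w) ≤ L * (|t - s| + dist u w))
    (hS'0 : ∀ u : E, S' 0 u = u)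
    (hS'semi : ∀ s t : ℝ, 0 ≤ s → 0 ≤ t → ∀ u : E, S' t (S' s u) = S' (t + s) u)
    (hS'lip : ∀ s t : ℝ, 0 ≤ s → 0 ≤ t → ∀ u w : E,
      dist (S' t u) (S' s w) ≤ L' * (|t - s| + dist u w))
    (u : E) (t : ℝ) (ht : 0 ≤ t) :
    ENNReal.ofReal (dist (S t u) (S' t u)) ≤
      ENNReal.ofReal L *
        ∫⁻ s in Set.Ioc (0 : ℝ) t,
          ENNReal.ofReal
            (limsup (fun h : ℝ => dist (S h (S' s u)) (S' h (S' s u)) / h)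
              (nhdsWithin 0 (Set.Ioi 0))) := by
  have hS : IsLipschitzSemigroup_s1 S L := ⟨hS0, hSsemi, hSlip⟩
  have hS' : IsLipschitzSemigroup_s1 S' L' := ⟨hS'0, hS'semi, hS'lip⟩
  set ψ : ℕ → ℝ → ℝ := fun n s => supDiffQuot S S' (1 / ((n : ℝ) + 1)) (S' (max s 0) u)
  have hψ_int n : IntegrableOn (ψ n) (Ioc 0 t) :=
    (hS.intervalIntegrable_supDiffQuot_orbit hS' (by positivity) u 0 t).1
  have hbound n : ENNReal.ofReal (dist (S t u) (S' t u)) ≤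
      ENNReal.ofReal L * ∫⁻ s in Ioc 0 t, ENNReal.ofReal (ψ n s) := by
    rw [← ofReal_integral_eq_lintegral_ofReal (hψ_int n)
      (ae_of_all _ fun s => supDiffQuot_nonneg hS hS' (by positivity) _),
      ← ENNReal.ofReal_mul (hS.nonneg u), ← intervalIntegral.integral_of_le ht]
    exact ENNReal.ofReal_le_ofReal (hS.dist_le_mul_integral_supDiffQuot hS' (by positivity) ht u)
  have hmct : ∫⁻ s in Ioc 0 t, ⨅ n, ENNReal.ofReal (ψ n s) =
      ⨅ n, ∫⁻ s in Ioc 0 t, ENNReal.ofReal (ψ n s) :=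
    lintegral_iInf (fun n => (lowerSemicontinuous_supDiffQuot_comp hS hS'
        (hS'.continuous_apply_max u)).measurable.ennreal_ofReal)
      (fun _ _ hmn s => ENNReal.ofReal_le_ofReal <|
        supDiffQuot_mono hS hS' (by positivity) (Nat.one_div_le_one_div hmn) _)
      (hψ_int 0).lintegral_lt_top.ne
  calc ENNReal.ofReal (dist (S t u) (S' t u))
      ≤ ⨅ n, ENNReal.ofReal L * ∫⁻ s in Ioc 0 t, ENNReal.ofReal (ψ n s) := le_iInf hbound
    _ = ENNReal.ofReal L * ∫⁻ s in Ioc 0 t, ⨅ n, ENNReal.ofReal (ψ n s) := by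
        rw [hmct, ENNReal.mul_iInf (by simp)]
    _ ≤ _ := by
        refine mul_le_mul_right (setLIntegral_mono' measurableSet_Ioc fun s hs => ?_) _
        simpa [ψ, max_eq_left hs.1.le] using iInf_ofReal_supDiffQuot_le_limsup hS hS' (S' s u)

/-- Comparison of two Lipschitz semigroups: the distance between the two orbits at time `t`
is bounded by `L` times the (upper Lebesgue) integral along the orbit of `S'` of the
distance between the tangent vector fields,
`limsup_{h→0⁺} d(S_h (S'_s u), S'_h (S'_s u))/h`. -/
theorem semigroup_comparison {E : Type*} [MetricSpace E]
    (S S' : ℝ → E → E) (L L' : ℝ) (hL : 0 < L) (hL' : 0 < L')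
    (hS0 : ∀ u : E, S 0 u = u)
    (hSsemi : ∀ s t : ℝ, 0 ≤ s → 0 ≤ t → ∀ u : E, S t (S s u) = S (t + s) u)
    (hSlip : ∀ s t : ℝ, 0 ≤ s → 0 ≤ t → ∀ u w : E,
      dist (S t u) (S s w) ≤ L * (|t - s| + dist u w))
    (hS'0 : ∀ u : E, S' 0 u = u)
    (hS'semi : ∀ s t : ℝ, 0 ≤ s → 0 ≤ t → ∀ u : E, S' t (S' s u) = S' (t + s) u)
    (hS'lip : ∀ s t : ℝ, 0 ≤ s → 0 ≤ t → ∀ u w : E,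
      dist (S' t u) (S' s w) ≤ L' * (|t - s| + dist u w))
    (u : E) (t : ℝ) (ht : 0 ≤ t) :
    ENNReal.ofReal (dist (S t u) (S' t u)) ≤
      ENNReal.ofReal L *
        ∫⁻ s in Set.Ioc (0 : ℝ) t,
          ENNReal.ofReal
            (limsup (fun h : ℝ => dist (S h (S' s u)) (S' h (S' s u)) / h)
              (nhdsWithin 0 (Set.Ioi 0))) :=
  semigroup_comparison_general S S' L L' hS0 hSsemi hSlip hS'0 hS'semi hS'lip u t ht
end

section
/- Let m ≤ M be real numbers, let C > 0, and let v : ℝ → [m, M] be a function satisfying the one-sided Lipschitz condition v(y) − v(x) ≤ C·(y − x) for all x < y. Then for all real a < b the total variation of v on [a,b] satisfies Tot.Var.(v; [a,b]) ≤ 2C·(b − a) + (M − m). In particular, a function with values in a compact interval K satisfying the one-sided bound with constant 1/(κ t) has total variation on [a,b] at most 2(b−a)/(κ t) + diam(K). -/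
/-!
If `v y - v x ≤ C (y - x)` for `x < y`, then `x ↦ C x - v x` is monotone, so `v` is the
difference of two monotone functions. Their variations on `[a, b]` are their increments,
`C (b - a)` and `C (b - a) - (v b - v a)`, and the latter is at most `C (b - a) + (M - m)`.
-/

open Set

theorem eVariationOn_sub_le {α E : Type*} [LinearOrder α] [SeminormedAddCommGroup E]
    (f g : α → E) (s : Set α) :
    eVariationOn (f - g) s ≤ eVariationOn f s + eVariationOn g s := by
  refine iSup_le fun ⟨n, u, hu, us⟩ => ?_
  calc ∑ i ∈ Finset.range n, edist ((f - g) (u (i + 1))) ((f - g) (u i))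
      ≤ ∑ i ∈ Finset.range n,
          (edist (f (u (i + 1))) (f (u i)) + edist (g (u (i + 1))) (g (u i))) := by
        gcongr with i
        simpa only [Pi.sub_apply, sub_eq_add_neg, edist_neg_neg] using
          edist_add_add_le (f (u (i + 1))) (-g (u (i + 1))) (f (u i)) (-g (u i))
    _ ≤ eVariationOn f s + eVariationOn g s := by
        rw [Finset.sum_add_distrib]
        exact add_le_add (eVariationOn.sum_le hu us) (eVariationOn.sum_le hu us)

theorem monotoneOn_mul_sub_of_sub_le_mul_sub {f : ℝ → ℝ} {s : Set ℝ} {C : ℝ}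
    (hf : ∀ x ∈ s, ∀ y ∈ s, x < y → f y - f x ≤ C * (y - x)) :
    MonotoneOn (fun x => C * x - f x) s :=
  monotoneOn_iff_forall_lt.2 fun x hx y hy hxy => by linarith [hf x hx y hy hxy]

theorem eVariationOn_le_of_sub_le_mul_sub {f : ℝ → ℝ} {s : Set ℝ} {C a b : ℝ} (hC : 0 ≤ C)
    (ha : a ∈ s) (hb : b ∈ s) (hab : a ≤ b)
    (hf : ∀ x ∈ s, ∀ y ∈ s, x < y → f y - f x ≤ C * (y - x)) :
    eVariationOn f (s ∩ Icc a b) ≤ ENNReal.ofReal (2 * C * (b - a) + (f a - f b)) := by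
  have hlin : MonotoneOn (fun x => C * x) s := fun _ _ _ _ hxy =>
    mul_le_mul_of_nonneg_left hxy hC
  have hdecomp : f = (fun x => C * x) - fun x => C * x - f x := by
    funext x; simp only [Pi.sub_apply, sub_sub_cancel]
  have hg := monotoneOn_mul_sub_of_sub_le_mul_sub hf
  calc eVariationOn f (s ∩ Icc a b)
      ≤ eVariationOn (fun x => C * x) (s ∩ Icc a b)
          + eVariationOn (fun x => C * x - f x) (s ∩ Icc a b) := by
        conv_lhs => rw [hdecomp]
        exact eVariationOn_sub_le _ _ _
    _ = ENNReal.ofReal (C * b - C * a) + ENNReal.ofReal (C * b - f b - (C * a - f a)) := by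
        rw [hlin.eVariationOn_eq ha hb, hg.eVariationOn_eq ha hb]
    _ = ENNReal.ofReal (2 * C * (b - a) + (f a - f b)) := by
        rw [← ENNReal.ofReal_add (sub_nonneg.2 (hlin ha hb hab)) (sub_nonneg.2 (hg ha hb hab))]
        congr 1
        ring

theorem totalVariation_of_oneSided_lipschitz_general
    (m M C : ℝ) (hC : 0 < C)
    (v : ℝ → ℝ) (hv : ∀ x, v x ∈ Set.Icc m M)
    (hosl : ∀ x y : ℝ, x < y → v y - v x ≤ C * (y - x)) :
    ∀ a b : ℝ, a < b →
      eVariationOn v (Set.Icc a b) ≤ ENNReal.ofReal (2 * C * (b - a) + (M - m)) := by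
  intro a b hab
  have hvar := eVariationOn_le_of_sub_le_mul_sub (s := univ) hC.le (mem_univ a) (mem_univ b)
    hab.le fun x _ y _ => hosl x y
  rw [univ_inter] at hvar
  exact hvar.trans (ENNReal.ofReal_le_ofReal (by linarith [(hv a).2, (hv b).1]))

/-- A function with values in `[m, M]` satisfying the one-sided Lipschitz condition
`v(y) − v(x) ≤ C (y − x)` for `x < y` has total variation on `[a,b]` at most
`2C(b − a) + (M − m)`. -/
theorem totalVariation_of_oneSided_lipschitz
    (m M C : ℝ) (hm : m ≤ M) (hC : 0 < C)
    (v : ℝ → ℝ) (hv : ∀ x, v x ∈ Set.Icc m M)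
    (hosl : ∀ x y : ℝ, x < y → v y - v x ≤ C * (y - x)) :
    ∀ a b : ℝ, a < b →
      eVariationOn v (Set.Icc a b) ≤ ENNReal.ofReal (2 * C * (b - a) + (M - m)) :=
  totalVariation_of_oneSided_lipschitz_general m M C hC v hv hosl
end
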